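/- Let f : {0,1}^n → {-1,1} be a Boolean function and d ≥ 1 an integer. Then U^d(f) ≤ U^1(f) + (2^{d-1} − 1)·max_i Inf_i(f), where U^d(f) := E_{x,x_1,...,x_d}[∏_{S⊆[d]} f(x + ∑_{i∈S} x_i)] is the dimension-d Gowers uniformity and Inf_i(f) = Pr_x[f(x) ≠ f(x+e_i)]. -/
import Mathlib
open Finset
open scoped Classical

/-- Dimension-`d` Gowers uniformity of `f : {0,1}^n → ℝ`. -/
noncomputable def gowersU {n : ℕ} (d : ℕ) (f : (Fin n → ZMod 2) → ℝ) : ℝ :=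
  (∑ x : Fin n → ZMod 2, ∑ y : Fin d → Fin n → ZMod 2,
      ∏ S : Finset (Fin d), f (x + ∑ i ∈ S, y i)) / (2 ^ n * (2 ^ n : ℝ) ^ d)

/-- Influence of coordinate `i` for a Boolean-valued function. -/
noncomputable def boolInfluence {n : ℕ} (i : Fin n) (g : (Fin n → ZMod 2) → ℝ) : ℝ :=
  ((Finset.univ.filter fun x : Fin n → ZMod 2 =>
      g x ≠ g (x + Pi.single i 1)).card : ℝ) / 2 ^ n

namespace GAux
variable {n : ℕ}

abbrev V (n : ℕ) := Fin n → ZMod 2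

noncomputable def sgn : ZMod 2 → ℝ := fun b => if b = 0 then 1 else -1

lemma zmod2_cases (a : ZMod 2) : a = 0 ∨ a = 1 := by revert a; decide

lemma sgn_add (a b : ZMod 2) : sgn (a + b) = sgn a * sgn b := by
  have h11 : (1 + 1 : ZMod 2) = 0 := by decide
  have h10 : (1 : ZMod 2) ≠ 0 := by decide
  rcases zmod2_cases a with rfl | rfl <;> rcases zmod2_cases b with rfl | rfl <;>
    simp [sgn, h11, h10]

lemma sgn_zero : sgn 0 = 1 := by norm_num [sgn]

lemma sum_zmod2 (F : ZMod 2 → ℝ) : (∑ b : ZMod 2, F b) = F 0 + F 1 := by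
  rw [show (univ : Finset (ZMod 2)) = {0, 1} by decide]
  simp [Finset.sum_insert, show (0 : ZMod 2) ≠ 1 by decide]

lemma sum_sgn_mul (a : ZMod 2) : (∑ b : ZMod 2, sgn (a * b)) = if a = 0 then 2 else 0 := by
  rw [sum_zmod2]
  rcases zmod2_cases a with h | h <;> subst h <;>
    norm_num [sgn, show (1 : ZMod 2) ≠ 0 by decide]

noncomputable def chi (α x : V n) : ℝ := ∏ i, sgn (α i * x i)

lemma chi_add_right (α x y : V n) : chi α (x + y) = chi α x * chi α y := by
  rw [chi, chi, chi, ← Finset.prod_mul_distrib]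
  exact Finset.prod_congr rfl fun i _ => by
    simp [Pi.add_apply, mul_add, sgn_add]

lemma chi_comm (α x : V n) : chi α x = chi x α := by
  unfold chi; exact Finset.prod_congr rfl fun i _ => by rw [mul_comm]

lemma chi_mul_left (α β x : V n) : chi α x * chi β x = chi (α + β) x := by
  rw [chi, chi, chi, ← Finset.prod_mul_distrib]
  exact Finset.prod_congr rfl fun i _ => by simp [Pi.add_apply, add_mul, sgn_add]

lemma sum_chi (α : V n) : (∑ x : V n, chi α x) = if α = 0 then 2 ^ n else 0 := by
  unfold chi
  have h := Finset.prod_univ_sum (κ := fun _ : Fin n => ZMod 2)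
    (t := fun _ => (univ : Finset (ZMod 2))) (f := fun i b => sgn (α i * b))
  rw [Fintype.piFinset_univ] at h
  rw [← h]
  by_cases hz : α = 0
  · subst hz; simp [sgn_zero]
  · obtain ⟨i, hi⟩ : ∃ i, α i ≠ 0 := by
      by_contra hc; push_neg at hc; exact hz (funext hc)
    rw [if_neg hz]
    exact Finset.prod_eq_zero (Finset.mem_univ i) (by rw [sum_sgn_mul, if_neg hi])

end GAux

namespace GAux
variable {n : ℕ}

/-- Fourier coefficient. -/
noncomputable def Fc (u : V n → ℝ) (α : V n) : ℝ := (∑ x : V n, u x * chi α x) / 2 ^ n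

lemma sum_chi_chi (α β : V n) :
    (∑ x : V n, chi α x * chi β x) = if α = β then 2 ^ n else 0 := by
  have : ∀ x : V n, chi α x * chi β x = chi (α + β) x := fun x => chi_mul_left α β x
  rw [Finset.sum_congr rfl fun x _ => this x, sum_chi]
  have vself : ∀ v : V n, v + v = 0 := by
    intro v; funext i
    rcases zmod2_cases (v i) with h | h <;>
      simp [Pi.add_apply, h, show (1 + 1 : ZMod 2) = 0 by decide]
  have : α + β = 0 ↔ α = β := by
    constructor
    · intro h
      have h2 := congrArg (· + β) h
      simp only [add_assoc, vself, add_zero, zero_add] at h2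
      exact h2
    · intro h; subst h; exact vself α
  simp [this]

lemma inversion (u : V n → ℝ) (x : V n) :
    (∑ α : V n, Fc u α * chi α x) = u x := by
  have h2n : (2 : ℝ) ^ n ≠ 0 := by positivity
  unfold Fc
  have : ∀ α : V n, (∑ y : V n, u y * chi α y) / 2 ^ n * chi α x
      = (∑ y : V n, u y * (chi α y * chi α x)) / 2 ^ n := by
    intro α
    rw [div_mul_eq_mul_div, Finset.sum_mul]
    congr 1; exact Finset.sum_congr rfl fun y _ => by ring
  rw [Finset.sum_congr rfl fun α _ => this α, ← Finset.sum_div, Finset.sum_comm]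
  have key : ∀ y : V n, (∑ α : V n, u y * (chi α y * chi α x)) = u y * (if y = x then (2:ℝ)^n else 0) := by
    intro y
    rw [← Finset.mul_sum]
    congr 1
    calc (∑ α : V n, chi α y * chi α x) = ∑ α : V n, chi y α * chi x α := by
          exact Finset.sum_congr rfl fun α _ => by rw [chi_comm α y, chi_comm α x]
      _ = if y = x then (2:ℝ)^n else 0 := sum_chi_chi y x
  rw [Finset.sum_congr rfl fun y _ => key y]
  simp [Finset.sum_ite_eq', mul_comm, h2n]

lemma parseval (u : V n → ℝ) :
    (∑ α : V n, (Fc u α) ^ 2) = (∑ x : V n, (u x) ^ 2) / 2 ^ n := by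
  have : ∀ α : V n, (Fc u α) ^ 2 = (∑ x : V n, u x * (Fc u α * chi α x)) / 2 ^ n := by
    intro α
    rw [pow_two, Fc, div_mul_eq_mul_div, Finset.sum_mul]
    congr 1
    · exact Finset.sum_congr rfl fun x _ => by ring
  rw [Finset.sum_congr rfl fun α _ => this α, ← Finset.sum_div, Finset.sum_comm]
  congr 1
  refine Finset.sum_congr rfl fun x _ => ?_
  rw [← Finset.mul_sum, inversion, pow_two]

lemma fc_sum (u : V n → ℝ) (α : V n) : (∑ x : V n, u x * chi α x) = 2 ^ n * Fc u α := by
  rw [Fc, mul_div_cancel₀]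
  positivity

/-- Correlation formula. -/
lemma corr (u : V n → ℝ) (h : V n) :
    (∑ x : V n, u x * u (x + h)) = 2 ^ n * ∑ α : V n, (Fc u α) ^ 2 * chi α h := by
  have key : ∀ x : V n, u x * u (x + h) = ∑ α : V n, u x * chi α x * ((Fc u α) * chi α h) := by
    intro x
    conv_lhs => rw [← inversion u (x + h)]
    rw [Finset.mul_sum]
    exact Finset.sum_congr rfl fun α _ => by rw [chi_add_right]; ring
  rw [Finset.sum_congr rfl fun x _ => key x, Finset.sum_comm, Finset.mul_sum]
  refine Finset.sum_congr rfl fun α _ => ?_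
  rw [← Finset.sum_mul, fc_sum]; ring

lemma sum_sq_corr (u : V n → ℝ) :
    (∑ h : V n, (∑ x : V n, u x * u (x + h)) ^ 2)
      = (2 ^ n) ^ 3 * ∑ α : V n, (Fc u α) ^ 4 := by
  have : ∀ h : V n, (∑ x : V n, u x * u (x + h)) ^ 2
      = (2^n : ℝ)^2 * ∑ α : V n, ∑ β : V n, (Fc u α)^2 * (Fc u β)^2 * (chi α h * chi β h) := by
    intro h
    rw [corr, mul_pow, pow_two (∑ α : V n, (Fc u α) ^ 2 * chi α h), Finset.sum_mul_sum]
    congr 1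
    exact Finset.sum_congr rfl fun α _ => Finset.sum_congr rfl fun β _ => by ring
  rw [Finset.sum_congr rfl fun h _ => this h, ← Finset.mul_sum, Finset.sum_comm]
  have inner : ∀ α : V n, (∑ h : V n, ∑ β : V n, (Fc u α)^2 * (Fc u β)^2 * (chi α h * chi β h))
      = (2:ℝ)^n * (Fc u α)^4 := by
    intro α
    rw [Finset.sum_comm]
    have : ∀ β : V n, (∑ h : V n, (Fc u α)^2 * (Fc u β)^2 * (chi α h * chi β h))
        = (Fc u α)^2 * (Fc u β)^2 * (if α = β then (2:ℝ)^n else 0) := by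
      intro β
      rw [← Finset.mul_sum, sum_chi_chi]
    rw [Finset.sum_congr rfl fun β _ => this β]
    simp [Finset.sum_ite_eq, mul_comm]
    ring
  rw [Finset.sum_congr rfl fun α _ => inner α, ← Finset.mul_sum]
  ring

end GAux

namespace GAux
variable {n : ℕ}

lemma vself (v : V n) : v + v = 0 := by
  funext i
  rcases zmod2_cases (v i) with h | h <;>
    simp [Pi.add_apply, h, show (1 + 1 : ZMod 2) = 0 by decide]

lemma sum_shift (F : V n → ℝ) (e : V n) : (∑ x : V n, F (x + e)) = ∑ x : V n, F x :=
  Equiv.sum_comp (Equiv.addRight e) F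

lemma parseval_one (u : V n → ℝ) (hu : ∀ x, u x = 1 ∨ u x = -1) :
    (∑ α : V n, (Fc u α) ^ 2) = 1 := by
  rw [parseval]
  have : ∀ x : V n, (u x) ^ 2 = 1 := by
    intro x; rcases hu x with h | h <;> rw [h] <;> norm_num
  rw [Finset.sum_congr rfl fun x _ => this x]
  simp

lemma fc_sq_le_influence (u : V n → ℝ) (hu : ∀ x, u x = 1 ∨ u x = -1) (i : Fin n)
    (α : V n) (hαi : α i = 1) : (Fc u α) ^ 2 ≤ boolInfluence i u := by
  set e : V n := Pi.single i 1 with he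
  have chi_e : chi α e = -1 := by
    rw [chi]
    rw [Finset.prod_eq_single i (fun j _ hj => by
      simp [he, Pi.single_apply, hj, sgn_zero]) (fun h => absurd (Finset.mem_univ i) h)]
    simp [he, Pi.single_apply, hαi, sgn, show (1 : ZMod 2) ≠ 0 by decide]
  have shift : Fc (fun x => u (x + e)) α = chi α e * Fc u α := by
    unfold Fc
    beta_reduce
    have step : (∑ x : V n, u (x + e) * chi α x) = ∑ x : V n, (u x * chi α x) * chi α e := by
      rw [← sum_shift (fun z => (u z * chi α z) * chi α e) e]
      refine Finset.sum_congr rfl fun x _ => ?_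
      show u (x + e) * chi α x = (u (x + e) * chi α (x + e)) * chi α e
      rw [chi_add_right, chi_e]; ring
    rw [step, ← Finset.sum_mul]
    ring
  set D : V n → ℝ := fun x => u x - u (x + e) with hD
  have fcD : Fc D α = 2 * Fc u α := by
    have : Fc D α = Fc u α - Fc (fun x => u (x + e)) α := by
      unfold Fc
      beta_reduce
      rw [div_sub_div_same, ← Finset.sum_sub_distrib]
      congr 1
      exact Finset.sum_congr rfl fun x _ => by rw [hD]; ring
    rw [this, shift, chi_e]; ring
  have hsq : ∀ x : V n, (D x) ^ 2 = if u x ≠ u (x + e) then (4:ℝ) else 0 := by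
    intro x
    by_cases h : u x = u (x + e)
    · simp [hD, h]
    · rw [if_pos h]
      rcases hu x with h1 | h1 <;> rcases hu (x + e) with h2 | h2 <;>
        simp [hD, h1, h2] at h ⊢ <;> norm_num
  have hDsum : (∑ x : V n, (D x) ^ 2) = 4 * ((Finset.univ.filter fun x : V n =>
      u x ≠ u (x + Pi.single i 1)).card : ℝ) := by
    rw [Finset.sum_congr rfl fun x _ => hsq x, Finset.sum_ite, Finset.sum_const,
      Finset.sum_const_zero, add_zero, nsmul_eq_mul]
    rw [mul_comm]
  have hle : (Fc D α) ^ 2 ≤ ∑ β : V n, (Fc D β) ^ 2 :=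
    Finset.single_le_sum (f := fun β : V n => (Fc D β) ^ 2)
      (fun β _ => sq_nonneg _) (Finset.mem_univ α)
  rw [parseval, hDsum] at hle
  rw [fcD] at hle
  have h2n : (0:ℝ) < 2 ^ n := by positivity
  rw [boolInfluence]
  have h4 : (2 * Fc u α) ^ 2 = 4 * (Fc u α) ^ 2 := by ring
  rw [h4, mul_div_assoc] at hle
  linarith

end GAux

namespace GAux
variable {n : ℕ}

/-- characteristic sum vector -/
noncomputable def cvec {m : ℕ} (y : Fin m → V n) (ε : Fin m → Bool) : V n :=
  ∑ i, cond (ε i) (y i) 0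

/-- The big product function. -/
noncomputable def P (f : V n → ℝ) (m : ℕ) (y : Fin m → V n) (x : V n) : ℝ :=
  ∏ ε : Fin m → Bool, f (x + cvec y ε)

def fbEquiv (m : ℕ) : (Fin m → Bool) ≃ Finset (Fin m) where
  toFun ε := Finset.univ.filter fun i => ε i
  invFun S i := decide (i ∈ S)
  left_inv ε := by funext i; simp
  right_inv S := by ext i; simp

lemma prod_finset_eq_P (f : V n → ℝ) (m : ℕ) (y : Fin m → V n) (x : V n) :
    (∏ S : Finset (Fin m), f (x + ∑ i ∈ S, y i)) = P f m y x := by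
  rw [P, ← Equiv.prod_comp (fbEquiv m) (fun S => f (x + ∑ i ∈ S, y i))]
  refine Finset.prod_congr rfl fun ε _ => ?_
  congr 2
  have hfb : (fbEquiv m) ε = Finset.univ.filter fun i => ε i := rfl
  rw [hfb, Finset.sum_filter, cvec]
  exact Finset.sum_congr rfl fun i _ => by cases ε i <;> simp

lemma P_bool (f : V n → ℝ) (hbool : ∀ x, f x = 1 ∨ f x = -1) (m : ℕ)
    (y : Fin m → V n) (x : V n) : P f m y x = 1 ∨ P f m y x = -1 := by
  refine Finset.prod_induction _ (fun r => r = 1 ∨ r = -1) ?_ (Or.inl rfl)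
    (fun ε _ => hbool _)
  rintro a b (rfl | rfl) (rfl | rfl) <;> norm_num

lemma P_cons (f : V n → ℝ) (m : ℕ) (y : Fin m → V n) (h x : V n) :
    P f (m + 1) (Fin.cons h y) x = P f m y x * P f m y (x + h) := by
  rw [P, ← Equiv.prod_comp (Fin.consEquiv fun _ => Bool)
    (fun ε => f (x + cvec (Fin.cons h y) ε)), Fintype.prod_prod_type]
  have key : ∀ (b : Bool) (ε : Fin m → Bool),
      cvec (Fin.cons h y) (Fin.consEquiv (fun _ => Bool) (b, ε))
        = cond b h 0 + cvec y ε := by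
    intro b ε
    show cvec (Fin.cons h y) (Fin.cons b ε) = _
    rw [cvec, cvec, Fin.sum_univ_succ]
    simp [Fin.cons_zero, Fin.cons_succ]
  rw [Fintype.prod_bool]
  rw [P, P, mul_comm]
  congr 1
  · refine Finset.prod_congr rfl fun ε _ => ?_
    rw [key]
    congr 1
    simp
  · refine Finset.prod_congr rfl fun ε _ => ?_
    rw [key]
    congr 1
    show x + (h + cvec y ε) = x + h + cvec y ε
    rw [add_assoc]

lemma sum_pi_succ (d : ℕ) (G : (Fin (d + 1) → V n) → ℝ) :
    (∑ y, G y) = ∑ h : V n, ∑ y' : Fin d → V n, G (Fin.cons h y') := by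
  rw [← Equiv.sum_comp (Fin.consEquiv fun _ => V n) G, Fintype.sum_prod_type]
  rfl

end GAux

namespace GAux
variable {n : ℕ}

lemma chi_zero (x : V n) : chi 0 x = 1 := by
  rw [chi]
  exact Finset.prod_eq_one fun i _ => by simp [sgn_zero]

lemma infl_P_le (f : V n → ℝ) (m : ℕ) (y : Fin m → V n) (i : Fin n) :
    boolInfluence i (P f m y) ≤ 2 ^ m * boolInfluence i f := by
  set e : V n := Pi.single i 1 with he
  have hcard : ((Finset.univ.filter fun x : V n => P f m y x ≠ P f m y (x + e)).card : ℝ)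
      ≤ 2 ^ m * ((Finset.univ.filter fun x : V n => f x ≠ f (x + e)).card : ℝ) := by
    have hsub : (Finset.univ.filter fun x : V n => P f m y x ≠ P f m y (x + e))
        ⊆ Finset.univ.biUnion fun ε : Fin m → Bool =>
            Finset.univ.filter fun x : V n => f (x + cvec y ε) ≠ f (x + cvec y ε + e) := by
      intro x hx
      rw [Finset.mem_filter] at hx
      rw [Finset.mem_biUnion]
      by_contra hc
      push_neg at hc
      refine hx.2 ?_
      rw [P, P]
      refine Finset.prod_congr rfl fun ε _ => ?_
      have h1 := hc ε (Finset.mem_univ ε)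
      rw [Finset.mem_filter, not_and] at h1
      have h2 := h1 (Finset.mem_univ x)
      push_neg at h2
      rw [h2]
      congr 1
      rw [add_right_comm]
    have hbu := Finset.card_biUnion_le (s := (Finset.univ : Finset (Fin m → Bool)))
      (t := fun ε => Finset.univ.filter fun x : V n =>
        f (x + cvec y ε) ≠ f (x + cvec y ε + e))
    have heach : ∀ ε : Fin m → Bool,
        (Finset.univ.filter fun x : V n => f (x + cvec y ε) ≠ f (x + cvec y ε + e)).card
          = (Finset.univ.filter fun x : V n => f x ≠ f (x + e)).card := by
      intro ε
      refine Finset.card_bij' (fun x _ => x + cvec y ε) (fun z _ => z + cvec y ε)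
        ?_ ?_ ?_ ?_
      · intro x hx
        rw [Finset.mem_filter] at hx ⊢
        exact ⟨Finset.mem_univ _, hx.2⟩
      · intro z hz
        rw [Finset.mem_filter] at hz ⊢
        refine ⟨Finset.mem_univ _, ?_⟩
        rw [add_assoc, vself, add_zero]
        exact hz.2
      · intro x _
        show x + cvec y ε + cvec y ε = x
        rw [add_assoc, vself, add_zero]
      · intro z _
        show z + cvec y ε + cvec y ε = z
        rw [add_assoc, vself, add_zero]
    calc ((Finset.univ.filter fun x : V n => P f m y x ≠ P f m y (x + e)).card : ℝ)
        ≤ ((Finset.univ.biUnion fun ε : Fin m → Bool =>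
            Finset.univ.filter fun x : V n =>
              f (x + cvec y ε) ≠ f (x + cvec y ε + e)).card : ℝ) := by
          exact_mod_cast Nat.cast_le.mpr (Finset.card_le_card hsub)
      _ ≤ ((∑ ε : Fin m → Bool, (Finset.univ.filter fun x : V n =>
            f (x + cvec y ε) ≠ f (x + cvec y ε + e)).card : ℕ) : ℝ) := by
          exact_mod_cast Nat.cast_le.mpr hbu
      _ = 2 ^ m * ((Finset.univ.filter fun x : V n => f x ≠ f (x + e)).card : ℝ) := by
          rw [Finset.sum_congr rfl fun ε _ => heach ε, Finset.sum_const]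
          simp [Fintype.card_fun]
  rw [boolInfluence, boolInfluence, ← he]
  have h2n : (0:ℝ) < 2 ^ n := by positivity
  rw [div_le_iff₀ h2n]
  calc ((Finset.univ.filter fun x : V n => P f m y x ≠ P f m y (x + e)).card : ℝ)
      ≤ 2 ^ m * ((Finset.univ.filter fun x : V n => f x ≠ f (x + e)).card : ℝ) := hcard
    _ = 2 ^ m * (((Finset.univ.filter fun x : V n => f x ≠ f (x + e)).card : ℝ) / 2 ^ n) * 2 ^ n := by
        field_simp
  

end GAux

namespace GAux
variable {n : ℕ}

lemma key_y (f : V n → ℝ) (hbool : ∀ x, f x = 1 ∨ f x = -1) (m : ℕ) (y : Fin m → V n)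
    (I : ℝ) (hI0 : 0 ≤ I) (hInf : ∀ i : Fin n, boolInfluence i f ≤ I) :
    (∑ α : V n, (Fc (P f m y) α) ^ 4) ≤ (Fc (P f m y) 0) ^ 2 + 2 ^ m * I := by
  set u := P f m y with hu
  set a := Fc u with ha
  have hub : ∀ x, u x = 1 ∨ u x = -1 := P_bool f hbool m y
  have hpars : (∑ α : V n, a α ^ 2) = 1 := parseval_one u hub
  have ha0 : a 0 ^ 2 ≤ 1 := by
    rw [← hpars]
    exact Finset.single_le_sum (f := fun α : V n => a α ^ 2)
      (fun β _ => sq_nonneg _) (Finset.mem_univ 0)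
  have hα : ∀ α : V n, α ≠ 0 → a α ^ 2 ≤ 2 ^ m * I := by
    intro α hne
    obtain ⟨i, hi⟩ : ∃ i, α i ≠ 0 := by
      by_contra hc; push_neg at hc; exact hne (funext hc)
    have hi1 : α i = 1 := by
      rcases zmod2_cases (α i) with h | h
      · exact absurd h hi
      · exact h
    calc a α ^ 2 ≤ boolInfluence i u := fc_sq_le_influence u hub i α hi1
      _ ≤ 2 ^ m * boolInfluence i f := infl_P_le f m y i
      _ ≤ 2 ^ m * I := by
          have : (0:ℝ) ≤ 2 ^ m := by positivity
          exact mul_le_mul_of_nonneg_left (hInf i) this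
  have hsplit : (∑ α : V n, a α ^ 4)
      = a 0 ^ 4 + ∑ α ∈ Finset.univ.erase 0, a α ^ 4 := by
    exact (Finset.add_sum_erase Finset.univ (fun α : V n => a α ^ 4)
      (Finset.mem_univ 0)).symm
  rw [hsplit]
  have h1 : a 0 ^ 4 ≤ a 0 ^ 2 := by nlinarith [sq_nonneg (a 0)]
  have h2 : (∑ α ∈ Finset.univ.erase 0, a α ^ 4) ≤ 2 ^ m * I := by
    calc (∑ α ∈ Finset.univ.erase 0, a α ^ 4)
        ≤ ∑ α ∈ Finset.univ.erase 0, (2 ^ m * I) * a α ^ 2 := by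
          refine Finset.sum_le_sum fun α hαm => ?_
          have hne : α ≠ 0 := (Finset.mem_erase.mp hαm).1
          have := hα α hne
          nlinarith [sq_nonneg (a α)]
      _ = (2 ^ m * I) * ∑ α ∈ Finset.univ.erase 0, a α ^ 2 := by
          rw [Finset.mul_sum]
      _ ≤ (2 ^ m * I) * 1 := by
          refine mul_le_mul_of_nonneg_left ?_ (by positivity)
          rw [← hpars]
          exact Finset.sum_le_sum_of_subset_of_nonneg (Finset.erase_subset _ _)
            fun β _ _ => sq_nonneg _
      _ = 2 ^ m * I := by ring
  linarith

lemma sq_sum (F : V n → ℝ) :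
    (∑ x : V n, ∑ h : V n, F x * F (x + h)) = (∑ x : V n, F x) ^ 2 := by
  have inner : ∀ x : V n, (∑ h : V n, F x * F (x + h)) = F x * ∑ z : V n, F z := by
    intro x
    rw [← Finset.mul_sum]
    congr 1
    calc (∑ h : V n, F (x + h)) = ∑ h : V n, F (h + x) := by
          exact Finset.sum_congr rfl fun h _ => by rw [add_comm]
      _ = ∑ z : V n, F z := sum_shift F x
  rw [Finset.sum_congr rfl fun x _ => inner x, ← Finset.sum_mul, pow_two]

end GAux

namespace GAux
variable {n : ℕ}

lemma sum_eq_fc0 (u : V n → ℝ) : (∑ x : V n, u x) = 2 ^ n * Fc u 0 := by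
  rw [← fc_sum u 0]
  exact Finset.sum_congr rfl fun x _ => by rw [chi_zero, mul_one]

lemma gowersA (f : V n → ℝ) (m : ℕ) :
    gowersU (m + 1) f = (∑ y : Fin m → V n, (Fc (P f m y) 0) ^ 2) / ((2:ℝ) ^ n) ^ m := by
  rw [gowersU]
  have hnum : (∑ x : V n, ∑ y : Fin (m+1) → V n, ∏ S : Finset (Fin (m+1)), f (x + ∑ i ∈ S, y i))
      = ∑ y : Fin m → V n, (∑ x : V n, P f m y x) ^ 2 := by
    calc (∑ x : V n, ∑ y : Fin (m+1) → V n, ∏ S : Finset (Fin (m+1)), f (x + ∑ i ∈ S, y i))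
        = ∑ x : V n, ∑ h : V n, ∑ y : Fin m → V n, P f m y x * P f m y (x + h) := by
          refine Finset.sum_congr rfl fun x _ => ?_
          rw [Finset.sum_congr rfl fun y (_ : y ∈ Finset.univ) => prod_finset_eq_P f (m+1) y x,
            sum_pi_succ m (fun y => P f (m+1) y x)]
          exact Finset.sum_congr rfl fun h _ =>
            Finset.sum_congr rfl fun y _ => P_cons f m y h x
      _ = ∑ x : V n, ∑ y : Fin m → V n, ∑ h : V n, P f m y x * P f m y (x + h) := by
          exact Finset.sum_congr rfl fun x _ => Finset.sum_comm
      _ = ∑ y : Fin m → V n, ∑ x : V n, ∑ h : V n, P f m y x * P f m y (x + h) :=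
          Finset.sum_comm
      _ = ∑ y : Fin m → V n, (∑ x : V n, P f m y x) ^ 2 :=
          Finset.sum_congr rfl fun y _ => sq_sum _
  rw [hnum, Finset.sum_congr rfl fun y (_ : y ∈ Finset.univ) => by
    rw [sum_eq_fc0 (P f m y), mul_pow]]
  rw [← Finset.mul_sum]
  rw [show (2:ℝ) ^ n * ((2:ℝ) ^ n) ^ (m+1) = ((2:ℝ)^n) ^ 2 * ((2:ℝ)^n) ^ m by ring]
  rw [mul_div_mul_left _ _ (by positivity : ((2:ℝ)^n) ^ 2 ≠ 0)]

end GAux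

namespace GAux
variable {n : ℕ}

lemma gowersB (f : V n → ℝ) (m : ℕ) :
    gowersU (m + 2) f
      = (∑ y : Fin m → V n, ∑ α : V n, (Fc (P f m y) α) ^ 4) / ((2:ℝ) ^ n) ^ m := by
  rw [gowersU]
  have hnum : (∑ x : V n, ∑ y : Fin (m+2) → V n, ∏ S : Finset (Fin (m+2)), f (x + ∑ i ∈ S, y i))
      = ∑ y : Fin m → V n, ((2:ℝ)^n) ^ 3 * ∑ α : V n, (Fc (P f m y) α) ^ 4 := by
    have expand : ∀ x : V n, (∑ y : Fin (m+2) → V n, ∏ S : Finset (Fin (m+2)), f (x + ∑ i ∈ S, y i))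
        = ∑ h1 : V n, ∑ h2 : V n, ∑ y : Fin m → V n,
            (P f m y x * P f m y (x + h1)) * (P f m y (x + h2) * P f m y (x + h2 + h1)) := by
      intro x
      rw [Finset.sum_congr rfl fun y (_ : y ∈ Finset.univ) => prod_finset_eq_P f (m+2) y x,
        sum_pi_succ (m+1) (fun y => P f (m+2) y x)]
      refine Finset.sum_congr rfl fun h1 _ => ?_
      rw [Finset.sum_congr rfl fun z (_ : z ∈ Finset.univ) => P_cons f (m+1) z h1 x,
        sum_pi_succ m (fun z => P f (m+1) z x * P f (m+1) z (x + h1))]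
      refine Finset.sum_congr rfl fun h2 _ => Finset.sum_congr rfl fun y _ => ?_
      rw [P_cons f m y h2 x, P_cons f m y h2 (x + h1)]
      have harg : x + h1 + h2 = x + h2 + h1 := by rw [add_right_comm]
      rw [harg]
      ring
    calc (∑ x : V n, ∑ y : Fin (m+2) → V n, ∏ S : Finset (Fin (m+2)), f (x + ∑ i ∈ S, y i))
        = ∑ x : V n, ∑ h1 : V n, ∑ h2 : V n, ∑ y : Fin m → V n,
            (P f m y x * P f m y (x + h1)) * (P f m y (x + h2) * P f m y (x + h2 + h1)) :=
          Finset.sum_congr rfl fun x _ => expand x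
      _ = ∑ x : V n, ∑ h1 : V n, ∑ y : Fin m → V n, ∑ h2 : V n,
            (P f m y x * P f m y (x + h1)) * (P f m y (x + h2) * P f m y (x + h2 + h1)) :=
          Finset.sum_congr rfl fun x _ => Finset.sum_congr rfl fun h1 _ => Finset.sum_comm
      _ = ∑ x : V n, ∑ y : Fin m → V n, ∑ h1 : V n, ∑ h2 : V n,
            (P f m y x * P f m y (x + h1)) * (P f m y (x + h2) * P f m y (x + h2 + h1)) :=
          Finset.sum_congr rfl fun x _ => Finset.sum_comm
      _ = ∑ y : Fin m → V n, ∑ x : V n, ∑ h1 : V n, ∑ h2 : V n,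
            (P f m y x * P f m y (x + h1)) * (P f m y (x + h2) * P f m y (x + h2 + h1)) :=
          Finset.sum_comm
      _ = ∑ y : Fin m → V n, ∑ h1 : V n, ∑ x : V n, ∑ h2 : V n,
            (P f m y x * P f m y (x + h1)) * (P f m y (x + h2) * P f m y (x + h2 + h1)) :=
          Finset.sum_congr rfl fun y _ => Finset.sum_comm
      _ = ∑ y : Fin m → V n, ((2:ℝ)^n) ^ 3 * ∑ α : V n, (Fc (P f m y) α) ^ 4 := by
          refine Finset.sum_congr rfl fun y _ => ?_
          rw [← sum_sq_corr (P f m y)]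
          refine Finset.sum_congr rfl fun h1 _ => ?_
          rw [← sq_sum (fun u => P f m y u * P f m y (u + h1))]
  rw [hnum, ← Finset.mul_sum]
  rw [show (2:ℝ) ^ n * ((2:ℝ) ^ n) ^ (m+2) = ((2:ℝ)^n) ^ 3 * ((2:ℝ)^n) ^ m by ring]
  rw [mul_div_mul_left _ _ (by positivity : ((2:ℝ)^n) ^ 3 ≠ 0)]

end GAux

namespace GAux
variable {n : ℕ}

lemma boolInfluence_nonneg (i : Fin n) (f : V n → ℝ) : 0 ≤ boolInfluence i f := by
  rw [boolInfluence]
  positivity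

lemma step_gowers (f : V n → ℝ) (hbool : ∀ x, f x = 1 ∨ f x = -1) (m : ℕ)
    (I : ℝ) (hI0 : 0 ≤ I) (hInf : ∀ i : Fin n, boolInfluence i f ≤ I) :
    gowersU (m + 2) f ≤ gowersU (m + 1) f + 2 ^ m * I := by
  rw [gowersB, gowersA]
  have hc : (0:ℝ) < ((2:ℝ) ^ n) ^ m := by positivity
  have hcard : ((Fintype.card (Fin m → V n)) : ℝ) = ((2:ℝ) ^ n) ^ m := by
    rw [Fintype.card_fun]
    push_cast
    congr 1
    · rw [Fintype.card_fun]
      simp [ZMod]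
    · simp
  have hsum : (∑ y : Fin m → V n, ∑ α : V n, (Fc (P f m y) α) ^ 4)
      ≤ (∑ y : Fin m → V n, (Fc (P f m y) 0) ^ 2) + ((2:ℝ) ^ n) ^ m * (2 ^ m * I) := by
    calc (∑ y : Fin m → V n, ∑ α : V n, (Fc (P f m y) α) ^ 4)
        ≤ ∑ y : Fin m → V n, ((Fc (P f m y) 0) ^ 2 + 2 ^ m * I) :=
          Finset.sum_le_sum fun y _ => key_y f hbool m y I hI0 hInf
      _ = (∑ y : Fin m → V n, (Fc (P f m y) 0) ^ 2) + ((2:ℝ) ^ n) ^ m * (2 ^ m * I) := by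
          rw [Finset.sum_add_distrib, Finset.sum_const, nsmul_eq_mul, Finset.card_univ, hcard]
  calc (∑ y : Fin m → V n, ∑ α : V n, (Fc (P f m y) α) ^ 4) / ((2:ℝ) ^ n) ^ m
      ≤ ((∑ y : Fin m → V n, (Fc (P f m y) 0) ^ 2) + ((2:ℝ) ^ n) ^ m * (2 ^ m * I))
          / ((2:ℝ) ^ n) ^ m := by
        exact (div_le_div_iff_of_pos_right hc).mpr hsum
    _ = (∑ y : Fin m → V n, (Fc (P f m y) 0) ^ 2) / ((2:ℝ) ^ n) ^ m + 2 ^ m * I := by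
        rw [add_div, mul_div_cancel_left₀ _ (ne_of_gt hc)]

end GAux

theorem gowersU_le_bool (n d : ℕ) (hn : 0 < n) (hd : 1 ≤ d)
    (f : (Fin n → ZMod 2) → ℝ) (hbool : ∀ x, f x = 1 ∨ f x = -1) :
    gowersU d f ≤ gowersU 1 f + ((2 : ℝ) ^ (d - 1) - 1) * ⨆ i : Fin n, boolInfluence i f := by
  set I := ⨆ i : Fin n, boolInfluence i f with hI
  have hbdd : BddAbove (Set.range fun i : Fin n => boolInfluence i f) :=
    Set.Finite.bddAbove (Set.finite_range _)
  have hInf : ∀ i : Fin n, boolInfluence i f ≤ I := fun i => le_ciSup hbdd i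
  have hI0 : 0 ≤ I := le_trans (GAux.boolInfluence_nonneg ⟨0, hn⟩ f) (hInf ⟨0, hn⟩)
  have main : ∀ m : ℕ, gowersU (m + 1) f ≤ gowersU 1 f + ((2:ℝ) ^ m - 1) * I := by
    intro m
    induction m with
    | zero => simp
    | succ k ih =>
      calc gowersU (k + 2) f ≤ gowersU (k + 1) f + 2 ^ k * I :=
            GAux.step_gowers f hbool k I hI0 hInf
        _ ≤ gowersU 1 f + ((2:ℝ) ^ k - 1) * I + 2 ^ k * I := by linarith
        _ = gowersU 1 f + ((2:ℝ) ^ (k + 1) - 1) * I := by rw [pow_succ]; ring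
  obtain ⟨m, rfl⟩ : ∃ m, d = m + 1 := ⟨d - 1, (Nat.succ_pred_eq_of_pos hd).symm⟩
  simpa using main m
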